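/- arXiv:1901.08028 — 3 statements merged into one kernel-verified Lean document; each statement's English description precedes it below -/
import Mathlib

section
/- Let z_1, ..., z_n be points of the open unit disc, with n ≥ 1, and let x ∈ ℂ with |x| = 1. Then ∏_{i=1}^n (x - z_i) ≠ 0 and the derivative ∑_{i=1}^n ∏_{j≠i}(x - z_j) ≠ 0. -/
open Finset

theorem Finset.sum_prod_erase_eq_prod_mul_sum_inv {ι K : Type*} [Field K] [DecidableEq ι]
    (s : Finset ι) (f : ι → K) (hf : ∀ i ∈ s, f i ≠ 0) :
    ∑ i ∈ s, ∏ j ∈ s.erase i, f j = (∏ i ∈ s, f i) * ∑ i ∈ s, (f i)⁻¹ := by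
  rw [mul_sum]
  refine sum_congr rfl fun i hi => ?_
  rw [← prod_erase_mul s f hi, mul_inv_cancel_right₀ (hf i hi)]

open ComplexConjugate in
theorem Complex.re_mul_inv_sub_pos {x w : ℂ} (hw : ‖w‖ < ‖x‖) : 0 < (x * (x - w)⁻¹).re := by
  have hxw : x - w ≠ 0 := sub_ne_zero.2 fun h => hw.ne (by rw [h])
  have hnum : 0 < (x * conj (x - w)).re := by
    have hcross : (x * conj w).re ≤ ‖x‖ * ‖w‖ := by
      simpa using re_le_norm (x * conj w)
    rw [map_sub, mul_sub, sub_re, mul_conj, normSq_eq_norm_sq, ofReal_re]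
    nlinarith [norm_nonneg w]
  rw [inv_def, ← mul_assoc, re_mul_ofReal]
  exact mul_pos hnum (inv_pos.2 (normSq_pos.2 hxw))

-- Multiplying by `x` puts every term in the open right half-plane.
theorem Complex.sum_inv_sub_ne_zero {ι : Type*} [Fintype ι] [Nonempty ι] (z : ι → ℂ) {x : ℂ}
    (hz : ∀ i, ‖z i‖ < ‖x‖) : ∑ i, (x - z i)⁻¹ ≠ 0 := by
  intro h
  have hpos : 0 < (x * ∑ i, (x - z i)⁻¹).re := by
    rw [mul_sum, re_sum]
    exact sum_pos (fun i _ => re_mul_inv_sub_pos (hz i)) univ_nonempty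
  simp [h] at hpos

/-- If `z₁, …, zₙ` (with `n ≥ 1`) lie in the open unit disc and `|x| = 1`,
then `∏ᵢ (x - zᵢ) ≠ 0` and `∑ᵢ ∏_{j≠i} (x - zⱼ) ≠ 0`. -/
theorem stmt_3 (n : ℕ) (hn : 1 ≤ n) (z : Fin n → ℂ)
    (hz : ∀ i, ‖z i‖ < 1) (x : ℂ) (hx : ‖x‖ = 1) :
    (∏ i, (x - z i)) ≠ 0 ∧
    (∑ i, ∏ j ∈ Finset.univ.erase i, (x - z j)) ≠ 0 := by
  have hzx : ∀ i, ‖z i‖ < ‖x‖ := hx ▸ hz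
  have hne : ∀ i ∈ univ, x - z i ≠ 0 := fun i _ => sub_ne_zero.2 fun h => (hzx i).ne (by rw [h])
  have hP : (∏ i, (x - z i)) ≠ 0 := prod_ne_zero_iff.2 hne
  have : Nonempty (Fin n) := Fin.pos_iff_nonempty.1 hn
  rw [sum_prod_erase_eq_prod_mul_sum_inv _ _ hne]
  exact ⟨hP, mul_ne_zero hP (Complex.sum_inv_sub_ne_zero z hzx)⟩
end

section
/- Let n be an odd positive integer and let z_1, ..., z_n lie in the open unit disc. Then there is no continuous function y : S¹ → ℂ (where S¹ = {x ∈ ℂ : |x| = 1}) satisfying y(x)² = ∏_{i=1}^n (x - z_i) for all x ∈ S¹. -/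
/-!
Write `n = 2m + 1`. On the unit circle each factor is `x - zᵢ = x (1 - zᵢ / x)` with
`1 - zᵢ / x` in the right half-plane, so `∏ᵢ (1 - zᵢ / x) = h(x)²` for a continuous nonvanishing
`h` built from principal square roots. A continuous `y` with `y² = ∏ᵢ (x - zᵢ)` would then give
the continuous square root `y / (xᵐ h)` of `x` itself. There is none: such a `u` satisfies
`u(-x) = ε i u(x)` with one sign `ε` on the connected circle, and applying this twice gives
`u(x) = -u(x)`.
-/

open Finset

theorem ne_zero_of_norm_eq_one {E : Type*} [SeminormedAddGroup E] {x : E} (hx : ‖x‖ = 1) :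
    x ≠ 0 :=
  ne_zero_of_norm_ne_zero (hx ▸ one_ne_zero)

theorem Continuous.exists_sq_eq_of_mem_slitPlane {X : Type*} [TopologicalSpace X] {f : X → ℂ}
    (hf : Continuous f) (hslit : ∀ x, f x ∈ Complex.slitPlane) :
    ∃ g : X → ℂ, Continuous g ∧ ∀ x, g x ^ 2 = f x :=
  ⟨fun x => f x ^ (2⁻¹ : ℂ), hf.cpow continuous_const hslit,
    fun _ => Complex.cpow_ofNat_inv_pow _ _⟩

theorem Complex.one_sub_div_mem_slitPlane {z w : ℂ} (h : ‖z‖ < ‖w‖) :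
    1 - z / w ∈ slitPlane := by
  have hw : 0 < ‖w‖ := (norm_nonneg z).trans_lt h
  simpa [sub_eq_add_neg] using
    mem_slitPlane_of_norm_lt_one (z := -(z / w)) (by rwa [norm_neg, norm_div, div_lt_one hw])

theorem Finset.prod_sub_eq_pow_mul_prod_one_sub_div {ι K : Type*} [Field K] (s : Finset ι)
    (z : ι → K) {x : K} (hx : x ≠ 0) :
    ∏ i ∈ s, (x - z i) = x ^ #s * ∏ i ∈ s, (1 - z i / x) := by
  rw [← prod_const, ← prod_mul_distrib]
  refine prod_congr rfl fun i _ => ?_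
  rw [mul_one_sub, mul_div_cancel₀ _ hx]

instance : PreconnectedSpace {x : ℂ // ‖x‖ = 1} :=
  Subtype.preconnectedSpace (s := {x : ℂ | ‖x‖ = 1}) <| by
    simpa [Metric.sphere] using (isConnected_sphere (by simp) (0 : ℂ) zero_le_one).isPreconnected

theorem not_exists_continuous_sqrt_coe_unitCircle :
    ¬ ∃ u : {x : ℂ // ‖x‖ = 1} → ℂ, Continuous u ∧ ∀ x, u x ^ 2 = x := by
  rintro ⟨u, hu, hsq⟩
  let neg : {x : ℂ // ‖x‖ = 1} → {x : ℂ // ‖x‖ = 1} := fun x => ⟨-x, by simpa using x.2⟩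
  have hneg : Continuous neg := continuous_subtype_val.neg.subtype_mk _
  have hu0 : ∀ x, u x ≠ 0 := fun x h =>
    ne_zero_of_norm_eq_one x.2 (by simpa [h] using (hsq x).symm)
  have hsign : (∀ x, u (neg x) = Complex.I * u x) ∨ ∀ x, u (neg x) = -(Complex.I * u x) := by
    simpa [Set.EqOn] using isPreconnected_univ.eq_or_eq_neg_of_sq_eq
      (hu.comp hneg).continuousOn (continuous_const.mul hu).continuousOn
      (fun x _ => by simp [mul_pow, hsq, neg])
      (fun {x} _ => mul_ne_zero Complex.I_ne_zero (hu0 x))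
  obtain ⟨c, hc, hu_neg⟩ : ∃ c : ℂ, c ^ 2 = -1 ∧ ∀ x, u (neg x) = c * u x := by
    rcases hsign with h | h
    · exact ⟨Complex.I, Complex.I_sq, h⟩
    · exact ⟨-Complex.I, by simp, fun x => by simp [h]⟩
  let x₀ : {x : ℂ // ‖x‖ = 1} := ⟨1, by simp⟩
  have hinvol : neg (neg x₀) = x₀ := Subtype.ext (neg_neg _)
  have h := hu_neg (neg x₀)
  rw [hinvol, hu_neg x₀] at h
  exact hu0 x₀ (by linear_combination (1 / 2 : ℂ) * h + (1 / 2 : ℂ) * u x₀ * hc)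

theorem not_exists_continuous_sqrt_pow_mul_sq {n : ℕ} (hn : Odd n)
    {h : {x : ℂ // ‖x‖ = 1} → ℂ} (hh : Continuous h) (h0 : ∀ x, h x ≠ 0) :
    ¬ ∃ y : {x : ℂ // ‖x‖ = 1} → ℂ, Continuous y ∧ ∀ x, y x ^ 2 = (x : ℂ) ^ n * h x ^ 2 := by
  rintro ⟨y, hy, hsq⟩
  obtain ⟨m, rfl⟩ := hn
  have hne : ∀ x : {x : ℂ // ‖x‖ = 1}, (x : ℂ) ^ m * h x ≠ 0 := fun x =>
    mul_ne_zero (pow_ne_zero m (ne_zero_of_norm_eq_one x.2)) (h0 x)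
  refine not_exists_continuous_sqrt_coe_unitCircle
    ⟨fun x => y x / ((x : ℂ) ^ m * h x), hy.div ((continuous_subtype_val.pow m).mul hh) hne,
      fun x => ?_⟩
  rw [div_pow, hsq, div_eq_iff (pow_ne_zero 2 (hne x))]
  ring

/-- For odd `n` and `z₁, …, zₙ` in the open unit disc, there is no continuous
function `y : S¹ → ℂ` with `y(x)² = ∏ᵢ (x - zᵢ)` for all `x ∈ S¹`. -/
theorem stmt_5 (n : ℕ) (hn : Odd n) (z : Fin n → ℂ)
    (hz : ∀ i, ‖z i‖ < 1) :
    ¬ ∃ y : {x : ℂ // ‖x‖ = 1} → ℂ,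
      Continuous y ∧ ∀ x : {x : ℂ // ‖x‖ = 1},
        (y x) ^ 2 = ∏ i, ((x : ℂ) - z i) := by
  rintro ⟨y, hy, hsq⟩
  have hslit : ∀ i (x : {x : ℂ // ‖x‖ = 1}), 1 - z i / x ∈ Complex.slitPlane := fun i x =>
    Complex.one_sub_div_mem_slitPlane (by simpa [x.2] using hz i)
  have hcont : ∀ i, Continuous fun x : {x : ℂ // ‖x‖ = 1} => 1 - z i / x := fun i =>
    continuous_const.sub <|
      continuous_const.div continuous_subtype_val fun x => ne_zero_of_norm_eq_one x.2
  choose g hg hg_sq using fun i => (hcont i).exists_sq_eq_of_mem_slitPlane (hslit i)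
  refine not_exists_continuous_sqrt_pow_mul_sq hn (h := fun x => ∏ i, g i x)
    (continuous_finsetProd _ fun i _ => hg i)
    (fun x => prod_ne_zero_iff.2 fun i _ hgi => Complex.slitPlane_ne_zero (hslit i x) ?_)
    ⟨y, hy, fun x => ?_⟩
  · rw [← hg_sq, hgi, zero_pow two_ne_zero]
  · rw [hsq, prod_sub_eq_pow_mul_prod_one_sub_div _ _ (ne_zero_of_norm_eq_one x.2), card_univ,
      Fintype.card_fin, ← prod_pow]
    simp only [hg_sq]
end

section
/- Let n be an odd positive integer. Consider the space T_n = {({z_1,...,z_n}, x, y) : z_i ∈ 𝔻 distinct, x ∈ closure(𝔻), y ∈ ℂ, y² = ∏(x - z_i), y ≠ 0} and the double cover Sq : T_n → C_{n,1}(closure 𝔻) forgetting y. Then the nontrivial deck transformation ε : T_n → T_n, ε(q, x, y) = (q, x, -y), is homotopic to the identity of T_n. -/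
open Finset

/-- The ordered model of the space `T_n`: tuples `(z, x, y)` with the `z i`
pairwise distinct points of the open unit disc, `x` in the closed unit disc,
`y ≠ 0` and `y² = ∏ᵢ (x - zᵢ)`. -/
def TnOrdered (n : ℕ) : Set ((Fin n → ℂ) × ℂ × ℂ) :=
  {p | Function.Injective p.1 ∧ (∀ i, ‖p.1 i‖ < 1) ∧
    ‖p.2.1‖ ≤ 1 ∧ p.2.2 ≠ 0 ∧ p.2.2 ^ 2 = ∏ i, (p.2.1 - p.1 i)}

/-- Two points of the ordered model are identified when they differ by a
relabelling of the configuration points. -/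
def TnSetoid (n : ℕ) : Setoid (TnOrdered n) where
  r p q := (∃ σ : Equiv.Perm (Fin n), (p : (Fin n → ℂ) × ℂ × ℂ).1 ∘ σ =
      (q : (Fin n → ℂ) × ℂ × ℂ).1) ∧
    (p : (Fin n → ℂ) × ℂ × ℂ).2 = (q : (Fin n → ℂ) × ℂ × ℂ).2
  iseqv := by
    constructor
    · exact fun p => ⟨⟨Equiv.refl _, rfl⟩, rfl⟩
    · rintro p q ⟨⟨σ, hσ⟩, h2⟩
      refine ⟨⟨σ.symm, ?_⟩, h2.symm⟩
      funext i
      have := congrFun hσ (σ.symm i)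
      simpa using this.symm
    · rintro p q r ⟨⟨σ, hσ⟩, h2⟩ ⟨⟨τ, hτ⟩, h2'⟩
      refine ⟨⟨τ.trans σ, ?_⟩, h2.trans h2'⟩
      funext i
      have h1 := congrFun hσ (τ i)
      have h3 := congrFun hτ i
      simpa using h1.trans h3

/-- The space `T_n` of triples `({z₁,…,zₙ}, x, y)` with the `zᵢ` distinct
points of the open unit disc, `x` in the closed unit disc, `y ≠ 0` and
`y² = ∏ᵢ (x - zᵢ)`; the configuration `{z₁,…,zₙ}` is unordered. It carries
the quotient topology. -/
def Tn (n : ℕ) : Type := Quotient (TnSetoid n)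

noncomputable instance (n : ℕ) : TopologicalSpace (Tn n) := by
  unfold Tn; infer_instance

/-- The nontrivial deck transformation `ε` of the double cover
`Sq : T_n → C_{n,1}(𝔻̄)`, given by `(q, x, y) ↦ (q, x, -y)`, on the
ordered model. -/
def epsOrdered (n : ℕ) : TnOrdered n → TnOrdered n := fun p =>
  ⟨(p.1.1, p.1.2.1, -p.1.2.2), p.2.1, p.2.2.1, p.2.2.2.1,
    neg_ne_zero.mpr p.2.2.2.2.1, by
      have := p.2.2.2.2.2
      simpa [neg_sq] using this⟩

/-- The deck transformation `ε : T_n → T_n`, `(q, x, y) ↦ (q, x, -y)`. -/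
def eps (n : ℕ) : Tn n → Tn n :=
  Quotient.map (epsOrdered n)
    (by rintro p q ⟨⟨σ, hσ⟩, h2⟩
        exact ⟨⟨σ, hσ⟩, by simp [epsOrdered, Prod.ext_iff] at h2 ⊢; tauto⟩)

theorem eps_continuous (n : ℕ) : Continuous (eps n) := by
  apply Continuous.quotient_map'
  · exact Continuous.subtype_mk
      (by fun_prop : Continuous fun p : TnOrdered n =>
        ((p : (Fin n → ℂ) × ℂ × ℂ).1, (p : (Fin n → ℂ) × ℂ × ℂ).2.1,
          -(p : (Fin n → ℂ) × ℂ × ℂ).2.2)) _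

/-- `ε` as a continuous map. -/
def epsMap (n : ℕ) : C(Tn n, Tn n) := ⟨eps n, eps_continuous n⟩

/-! Rotating the disc by `e^{2πit}` multiplies `∏ᵢ (x - zᵢ)` by `e^{2πint}`, so it lifts to `T_n` by
multiplying `y` by `e^{πint}`. At `t = 1` the rotation of the disc is the identity, while for odd `n`
the lift has multiplied `y` by `e^{πin} = -1`: it is `ε`. -/

open scoped Real

theorem rotate_mem_TnOrdered {n : ℕ} {p : (Fin n → ℂ) × ℂ × ℂ} (hp : p ∈ TnOrdered n)
    {u c : ℂ} (hu : ‖u‖ = 1) (hc : c ^ 2 = u ^ n) :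
    (u • p.1, u * p.2.1, c * p.2.2) ∈ TnOrdered n := by
  obtain ⟨hinj, hz, hx, hy, hsq⟩ := hp
  have hu0 : u ≠ 0 := norm_ne_zero_iff.mp (by rw [hu]; exact one_ne_zero)
  have hc0 : c ≠ 0 := by
    rintro rfl
    exact pow_ne_zero n hu0 (by rw [← hc]; ring)
  refine ⟨smul_right_injective _ hu0 |>.comp hinj, fun i => ?_, ?_, mul_ne_zero hc0 hy, ?_⟩
  · simpa [hu] using hz i
  · simpa [hu] using hx
  · simp only [Pi.smul_apply, smul_eq_mul, ← mul_sub, Finset.prod_mul_distrib, Finset.prod_const,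
      Finset.card_univ, Fintype.card_fin]
    rw [mul_pow, hc, hsq]

noncomputable def rotateOrdered (n : ℕ) (t : ℝ) (p : TnOrdered n) : TnOrdered n :=
  ⟨_, rotate_mem_TnOrdered p.2 (Complex.norm_exp_ofReal_mul_I (2 * π * t))
    (c := Complex.exp (↑(π * n * t) * Complex.I)) (by
      rw [← Complex.exp_nat_mul, ← Complex.exp_nat_mul]
      push_cast
      ring_nf)⟩

theorem continuous_rotateOrdered (n : ℕ) :
    Continuous fun q : ℝ × TnOrdered n => rotateOrdered n q.1 q.2 :=
  Continuous.subtype_mk (by fun_prop) _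

theorem rotateOrdered_zero {n : ℕ} (p : TnOrdered n) : rotateOrdered n 0 p = p := by
  ext <;> simp [rotateOrdered]

theorem rotateOrdered_one {n : ℕ} (hn : Odd n) (p : TnOrdered n) :
    rotateOrdered n 1 p = epsOrdered n p := by
  have hy : Complex.exp (π * n * Complex.I) = -1 := by
    rw [mul_comm _ (n : ℂ), mul_assoc, Complex.exp_nat_mul, Complex.exp_pi_mul_I, hn.neg_one_pow]
  ext <;> simp [rotateOrdered, epsOrdered, hy]

theorem rotateOrdered_rel {n : ℕ} (t : ℝ) {p q : TnOrdered n} (h : TnSetoid n p q) :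
    TnSetoid n (rotateOrdered n t p) (rotateOrdered n t q) := by
  obtain ⟨⟨σ, hσ⟩, h2⟩ := h
  exact ⟨⟨σ, by simp only [rotateOrdered, ← hσ]; rfl⟩, by simp only [rotateOrdered, h2]⟩

noncomputable def rotate (n : ℕ) (t : ℝ) : Tn n → Tn n :=
  Quotient.map (rotateOrdered n t) fun _ _ => rotateOrdered_rel t

/- `unitInterval × Tn n` is a quotient of `unitInterval × TnOrdered n` because `unitInterval` is
locally compact. -/
theorem continuous_rotate (n : ℕ) :
    Continuous fun q : unitInterval × Tn n => rotate n q.1 q.2 :=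
  isQuotientMap_quotient_mk'.continuous_lift_prod_right <| continuous_quotient_mk'.comp <|
    (continuous_rotateOrdered n).comp (continuous_subtype_val.prodMap continuous_id)

/-- For odd `n`, the nontrivial deck transformation `ε(q,x,y) = (q,x,-y)` of
the double cover `T_n → C_{n,1}(𝔻̄)` is homotopic to the identity of `T_n`. -/
theorem stmt_10 (n : ℕ) (hn : Odd n) :
    ContinuousMap.Homotopic (epsMap n) (ContinuousMap.id (Tn n)) :=
  .symm ⟨{
    toFun := fun q => rotate n q.1 q.2
    continuous_toFun := continuous_rotate n
    map_zero_left := Quotient.ind fun p => congrArg _ (rotateOrdered_zero p)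
    map_one_left := Quotient.ind fun p => congrArg _ (rotateOrdered_one hn p) }⟩
end
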